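/- arXiv:1404.3345 — 7 statements merged into one kernel-verified Lean document; each statement's English description precedes it below -/
import Mathlib

section
/- Let x, h : Ω → A be a.e. strongly measurable, suppose x is invertible in L⁰(Ω, A) with a.e. strongly measurable inverse y (so x(ω)y(ω) = y(ω)x(ω) = 1 a.e.), and suppose 2‖h(ω)‖·‖y(ω)‖ < 1 for μ-almost every ω (i.e., 2‖h‖ ≪ ‖x⁻¹‖⁻¹). Then x + h is invertible in L⁰(Ω, A) and its inverse z satisfies ‖z(ω) − y(ω)‖ ≤ 2‖y(ω)‖²‖h(ω)‖ for a.e. ω. (Proposition 2.3(ii), specialized to the Banach–Kantorovich algebra L⁰(Ω, A).) -/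
/-!
Pointwise, `x + h = x * (1 + y * h)` and `‖y * h‖ < 1/2`, so the Neumann series of `1 + y * h`
converges and `z = (1 + y * h)⁻¹ * y` inverts `x + h`; as an a.e. limit of measurable partial sums
it is measurable. For the estimate, `z - y = -(z * h * y)` gives `‖z‖ ≤ ‖y‖ + ‖z‖ ‖h‖ ‖y‖`, hence
`‖z‖ ≤ 2 ‖y‖` and `‖z - y‖ ≤ ‖z‖ ‖h‖ ‖y‖ ≤ 2 ‖y‖² ‖h‖`.
-/

open MeasureTheory Filter

section NormedRing

variable {R : Type*} [NormedRing R]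

theorem norm_sub_le_of_mul_add_eq_one {x y z h : R} (hxy : x * y = 1) (hz : z * (x + h) = 1)
    (hsmall : 2 * ‖h‖ * ‖y‖ < 1) : ‖z - y‖ ≤ 2 * ‖y‖ ^ 2 * ‖h‖ := by
  have hsub : z - y = -(z * h * y) := by
    calc z - y = z * (x * y) - z * (x + h) * y := by rw [hxy, hz, mul_one, one_mul]
      _ = -(z * h * y) := by noncomm_ring
  have hdiff : ‖z - y‖ ≤ ‖z‖ * ‖h‖ * ‖y‖ := by
    rw [hsub, norm_neg]
    exact (norm_mul_le _ _).trans (by gcongr; exact norm_mul_le _ _)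
  have hz_le : ‖z‖ ≤ 2 * ‖y‖ := by
    have : ‖z‖ ≤ ‖y‖ + ‖z‖ * ‖h‖ * ‖y‖ := by
      calc ‖z‖ = ‖y + (z - y)‖ := by rw [add_sub_cancel]
        _ ≤ ‖y‖ + ‖z - y‖ := norm_add_le _ _
        _ ≤ ‖y‖ + ‖z‖ * ‖h‖ * ‖y‖ := by gcongr
    nlinarith [norm_nonneg z]
  calc ‖z - y‖ ≤ ‖z‖ * ‖h‖ * ‖y‖ := hdiff
    _ ≤ 2 * ‖y‖ * ‖h‖ * ‖y‖ := by gcongr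
    _ = 2 * ‖y‖ ^ 2 * ‖h‖ := by ring

variable [HasSummableGeomSeries R]

/-- The Neumann-series inverse `(1 + y * h)⁻¹ * y` of `x + h`, where `y = x⁻¹`. -/
noncomputable def neumannInv (y h : R) : R := (∑' n : ℕ, (-(y * h)) ^ n) * y

theorem mul_neumannInv {x y h : R} (hxy : x * y = 1) (hyh : ‖y * h‖ < 1) :
    (x + h) * neumannInv y h = 1 := by
  have hfact : x + h = x * (1 - -(y * h)) := by
    rw [sub_neg_eq_add, mul_add, mul_one, ← mul_assoc, hxy, one_mul]
  rw [neumannInv, hfact, mul_assoc, ← mul_assoc (1 - _), mul_neg_geom_series _ (by rwa [norm_neg]),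
    one_mul, hxy]

theorem neumannInv_mul {x y h : R} (hyx : y * x = 1) (hyh : ‖y * h‖ < 1) :
    neumannInv y h * (x + h) = 1 := by
  have hfact : y * (x + h) = 1 - -(y * h) := by rw [sub_neg_eq_add, mul_add, hyx]
  rw [neumannInv, mul_assoc, hfact, geom_series_mul_neg _ (by rwa [norm_neg])]

theorem MeasureTheory.AEStronglyMeasurable.tsum_geometric {Ω : Type*} [MeasurableSpace Ω]
    {μ : Measure Ω} {u : Ω → R} (hu : AEStronglyMeasurable u μ) (hlt : ∀ᵐ ω ∂μ, ‖u ω‖ < 1) :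
    AEStronglyMeasurable (fun ω => ∑' n : ℕ, u ω ^ n) μ := by
  refine aestronglyMeasurable_of_tendsto_ae atTop
    (f := fun N ω => ∑ n ∈ Finset.range N, u ω ^ n)
    (fun N => Finset.aestronglyMeasurable_fun_sum _ fun n _ => hu.pow n) ?_
  filter_upwards [hlt] with ω hω
  exact (summable_geometric_of_norm_lt_one hω).hasSum.tendsto_sum_nat

end NormedRing

theorem stmt4_general {Ω : Type*} [MeasurableSpace Ω] (μ : Measure Ω)
    {A : Type*} [NormedRing A] [CompleteSpace A]
    (x h y : Ω → A)
    (hh : AEStronglyMeasurable h μ)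
    (hy : AEStronglyMeasurable y μ)
    (hinv : ∀ᵐ ω ∂μ, x ω * y ω = 1 ∧ y ω * x ω = 1)
    (hsmall : ∀ᵐ ω ∂μ, 2 * ‖h ω‖ * ‖y ω‖ < 1) :
    ∃ z : Ω → A, AEStronglyMeasurable z μ ∧
      (∀ᵐ ω ∂μ, (x ω + h ω) * z ω = 1 ∧ z ω * (x ω + h ω) = 1) ∧
      (∀ᵐ ω ∂μ, ‖z ω - y ω‖ ≤ 2 * ‖y ω‖ ^ 2 * ‖h ω‖) := by
  have hyh : ∀ᵐ ω ∂μ, ‖y ω * h ω‖ < 1 := by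
    filter_upwards [hsmall] with ω hω
    nlinarith [norm_mul_le (y ω) (h ω), norm_nonneg (h ω), norm_nonneg (y ω)]
  have hz_inv : ∀ᵐ ω ∂μ, (x ω + h ω) * neumannInv (y ω) (h ω) = 1 ∧
      neumannInv (y ω) (h ω) * (x ω + h ω) = 1 := by
    filter_upwards [hinv, hyh] with ω ⟨hxy, hyx⟩ hω
    exact ⟨mul_neumannInv hxy hω, neumannInv_mul hyx hω⟩
  refine ⟨fun ω => neumannInv (y ω) (h ω), ?_, hz_inv, ?_⟩
  · exact ((hy.mul hh).neg.tsum_geometric (by simpa only [Pi.neg_apply, Pi.mul_apply, norm_neg] using hyh)).mul hy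
  · filter_upwards [hinv, hz_inv, hsmall] with ω ⟨hxy, _⟩ ⟨_, hz⟩ hω
    exact norm_sub_le_of_mul_add_eq_one hxy hz hω

/-- If `x` is invertible in `L⁰(Ω, A)` with a.e. inverse `y` and `h`
satisfies `2‖h ω‖·‖y ω‖ < 1` a.e., then `x + h` is invertible in `L⁰(Ω, A)` and
its inverse `z` satisfies `‖z ω - y ω‖ ≤ 2‖y ω‖²‖h ω‖` a.e. (Proposition 2.3(ii).) -/
theorem stmt4 {Ω : Type*} [MeasurableSpace Ω] (μ : Measure Ω) [IsFiniteMeasure μ]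
    (hμ : 0 < μ Set.univ)
    {A : Type*} [NormedRing A] [NormedAlgebra ℂ A] [CompleteSpace A] [NormOneClass A]
    (x h y : Ω → A)
    (hx : AEStronglyMeasurable x μ) (hh : AEStronglyMeasurable h μ)
    (hy : AEStronglyMeasurable y μ)
    (hinv : ∀ᵐ ω ∂μ, x ω * y ω = 1 ∧ y ω * x ω = 1)
    (hsmall : ∀ᵐ ω ∂μ, 2 * ‖h ω‖ * ‖y ω‖ < 1) :
    ∃ z : Ω → A, AEStronglyMeasurable z μ ∧
      (∀ᵐ ω ∂μ, (x ω + h ω) * z ω = 1 ∧ z ω * (x ω + h ω) = 1) ∧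
      (∀ᵐ ω ∂μ, ‖z ω - y ω‖ ≤ 2 * ‖y ω‖ ^ 2 * ‖h ω‖) :=
  stmt4_general μ x h y hh hy hinv hsmall
end

section
/- For every a.e. strongly measurable x : Ω → A there exists a measurable function a : Ω → ℂ such that a·1 − x is not invertible in L⁰(Ω, A); that is, there is no a.e. strongly measurable y : Ω → A with (a(ω)·1 − x(ω))y(ω) = y(ω)(a(ω)·1 − x(ω)) = 1 for μ-almost every ω. In other words, the spectrum sp(x) = {a ∈ L⁰(Ω, ℂ) : a·1 − x not invertible} is non-empty. (Proposition 2.4, specialized to the Banach–Kantorovich algebra L⁰(Ω, A).) -/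
/-!
Approximate `x` by simple functions `sₙ` and choose a spectral value of each of their finitely many
values; this gives measurable `wₙ` with `wₙ ω ∈ σ(sₙ ω)` and `‖wₙ ω‖ ≤ ‖sₙ ω‖`. The set
`{(z, b) | z ∈ σ(b)}` is closed, so every cluster point of `(wₙ ω)` lies in `σ(x ω)`, and a
cluster point can be chosen measurably in `ω`: the lexicographically greatest one, whose real part
is `limsup Re wₙ` and whose imaginary part is a countable infimum of limsups.
-/

open MeasureTheory Filter Set Topology Bornology

theorem frequently_abs_sub_limsup_lt {u : ℕ → ℝ} (hu : IsBounded (range u)) {δ : ℝ}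
    (hδ : 0 < δ) : ∃ᶠ n in atTop, |u n - limsup u atTop| < δ :=
  have ⟨hu_below, hu_above⟩ := isBounded_iff_bddBelow_bddAbove.1 hu
  (MapClusterPt.limsup hu_below.isBoundedUnder_of_range.isCoboundedUnder_flip
    hu_above.isBoundedUnder_of_range).frequently (Metric.ball_mem_nhds _ hδ)

section LexLimsup

variable {u v : ℕ → ℝ} {m n : ℕ}

/-- The value `⨅ k, v k - 1` lies below every `v n`: it hides from `limsup` the terms with `u n`
far from `limsup u`. -/
noncomputable def lexMask (u v : ℕ → ℝ) (m n : ℕ) : ℝ :=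
  if |u n - limsup u atTop| < 1 / (m + 1) then v n else ⨅ k, v k - 1

/-- For bounded `u` and `v`, the greatest `y` such that `(limsup u, y)` is a cluster point of
`n ↦ (u n, v n)`. -/
noncomputable def lexLimsup (u v : ℕ → ℝ) : ℝ :=
  ⨅ m : ℕ, limsup (lexMask u v m) atTop

theorem ciInf_sub_one_le (hv : BddBelow (range v)) (n : ℕ) : ⨅ k, v k - 1 ≤ v n - 1 :=
  have ⟨b, hb⟩ := hv
  ciInf_le ⟨b - 1, by rintro _ ⟨k, rfl⟩; linarith [hb ⟨k, rfl⟩]⟩ n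

theorem lexMask_of_abs_sub_lt (h : |u n - limsup u atTop| < 1 / (m + 1)) :
    lexMask u v m n = v n :=
  if_pos h

theorem ciInf_sub_one_le_lexMask (hv : BddBelow (range v)) : ⨅ k, v k - 1 ≤ lexMask u v m n := by
  unfold lexMask; split_ifs <;> linarith [ciInf_sub_one_le hv n]

theorem lexMask_le (hv : BddBelow (range v)) : lexMask u v m n ≤ v n := by
  unfold lexMask; split_ifs <;> linarith [ciInf_sub_one_le hv n]

theorem lexMask_antitone (hv : BddBelow (range v)) : Antitone fun m => lexMask u v m n := by
  intro m₀ m hm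
  have : 1 / ((m : ℝ) + 1) ≤ 1 / (m₀ + 1) := by gcongr
  simp only [lexMask]; split_ifs <;> linarith [ciInf_sub_one_le hv n]

theorem abs_sub_limsup_lt_of_lt_lexMask (h : ⨅ k, v k - 1 < lexMask u v m n) :
    |u n - limsup u atTop| < 1 / (m + 1) := by
  by_contra hn
  exact h.ne' (if_neg hn)

theorem isBoundedUnder_lexMask (hv : BddAbove (range v)) (hv' : BddBelow (range v)) :
    IsBoundedUnder (· ≤ ·) atTop (lexMask u v m) :=
  have ⟨V, hV⟩ := hv
  isBoundedUnder_of ⟨V, fun n => (lexMask_le hv').trans (hV ⟨n, rfl⟩)⟩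

theorem isCoboundedUnder_lexMask (hv : BddBelow (range v)) :
    IsCoboundedUnder (· ≤ ·) atTop (lexMask u v m) :=
  isCoboundedUnder_le_of_le atTop fun _ => ciInf_sub_one_le_lexMask hv

theorem ciInf_sub_one_lt_limsup_lexMask (hu : IsBounded (range u)) (hv : IsBounded (range v)) :
    ⨅ k, v k - 1 < limsup (lexMask u v m) atTop := by
  obtain ⟨hv_below, hv_above⟩ := isBounded_iff_bddBelow_bddAbove.1 hv
  refine lt_of_lt_of_le (lt_add_one _) (le_limsup_of_frequently_le ?_
    (isBoundedUnder_lexMask hv_above hv_below))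
  refine (frequently_abs_sub_limsup_lt hu (by positivity : (0 : ℝ) < 1 / (m + 1))).mono
    fun n hn => ?_
  rw [lexMask_of_abs_sub_lt hn]
  linarith [ciInf_sub_one_le hv_below n]

theorem lexLimsup_le_limsup_lexMask (hu : IsBounded (range u)) (hv : IsBounded (range v))
    (m : ℕ) : lexLimsup u v ≤ limsup (lexMask u v m) atTop :=
  ciInf_le ⟨_, forall_mem_range.2 fun _ => (ciInf_sub_one_lt_limsup_lexMask hu hv).le⟩ m

theorem mapClusterPt_limsup_lexLimsup (hu : IsBounded (range u)) (hv : IsBounded (range v)) :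
    MapClusterPt (limsup u atTop, lexLimsup u v) atTop fun n => (u n, v n) := by
  obtain ⟨hv_below, hv_above⟩ := isBounded_iff_bddBelow_bddAbove.1 hv
  rw [Metric.nhds_basis_ball.mapClusterPt_iff_frequently]
  intro δ hδ
  obtain ⟨m₀, hm₀⟩ : ∃ m, limsup (lexMask u v m) atTop < lexLimsup u v + δ :=
    exists_lt_of_ciInf_lt (lt_add_of_pos_right _ hδ)
  obtain ⟨m₁, hm₁⟩ := exists_nat_one_div_lt hδ
  set m := max m₀ m₁
  have hm : 1 / ((m : ℝ) + 1) < δ := lt_of_le_of_lt (by gcongr; exact le_max_right _ _) hm₁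
  have h_upper : ∀ᶠ n in atTop, lexMask u v m n < lexLimsup u v + δ :=
    (eventually_lt_of_limsup_lt hm₀ (isBoundedUnder_lexMask hv_above hv_below)).mono
      fun n hn => (lexMask_antitone hv_below (le_max_left _ _)).trans_lt hn
  have h_lower : ∃ᶠ n in atTop, max (lexLimsup u v - δ) (⨅ k, v k - 1) < lexMask u v m n := by
    refine frequently_lt_of_lt_limsup (isCoboundedUnder_lexMask hv_below) (max_lt ?_ ?_)
    · linarith [lexLimsup_le_limsup_lexMask hu hv m]
    · exact ciInf_sub_one_lt_limsup_lexMask hu hv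
  refine (h_lower.and_eventually h_upper).mono fun n ⟨hlo, hhi⟩ => ?_
  rw [max_lt_iff] at hlo
  have hn := abs_sub_limsup_lt_of_lt_lexMask hlo.2
  rw [lexMask_of_abs_sub_lt hn] at hlo hhi
  rw [Metric.mem_ball, Prod.dist_eq, Real.dist_eq, Real.dist_eq, max_lt_iff]
  exact ⟨hn.trans hm, abs_sub_lt_iff.2 ⟨by linarith, by linarith⟩⟩

end LexLimsup

theorem measurable_lexLimsup {Ω : Type*} [MeasurableSpace Ω] {u v : ℕ → Ω → ℝ}
    (hu : ∀ n, Measurable (u n)) (hv : ∀ n, Measurable (v n)) :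
    Measurable fun ω => lexLimsup (u · ω) (v · ω) :=
  .iInf fun _ => .limsup fun n =>
    .ite (measurableSet_lt ((hu n).sub (.limsup hu)).abs measurable_const) (hv n)
      (.iInf fun k => (hv k).sub_const 1)

noncomputable def lexClusterPt (w : ℕ → ℂ) : ℂ :=
  ⟨limsup (fun n => (w n).re) atTop, lexLimsup (fun n => (w n).re) (fun n => (w n).im)⟩

theorem mapClusterPt_lexClusterPt {w : ℕ → ℂ} (hw : IsBounded (range w)) :
    MapClusterPt (lexClusterPt w) atTop w := by
  have hre : IsBounded (range fun n => (w n).re) :=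
    (Complex.reCLM.lipschitz.isBounded_image hw).subset (range_comp _ _).subset
  have him : IsBounded (range fun n => (w n).im) :=
    (Complex.imCLM.lipschitz.isBounded_image hw).subset (range_comp _ _).subset
  exact (mapClusterPt_limsup_lexLimsup hre him).continuousAt_comp
    Complex.equivRealProdCLM.symm.continuous.continuousAt

theorem measurable_lexClusterPt {Ω : Type*} [MeasurableSpace Ω] {w : ℕ → Ω → ℂ}
    (hw : ∀ n, Measurable (w n)) : Measurable fun ω => lexClusterPt (w · ω) :=
  Complex.measurableEquivRealProd.symm.measurable.comp <|
    (Measurable.limsup fun n => Complex.measurable_re.comp (hw n)).prodMk <|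
      measurable_lexLimsup (fun n => Complex.measurable_re.comp (hw n))
        fun n => Complex.measurable_im.comp (hw n)

section Spectrum

variable {A : Type*} [NormedRing A] [NormedAlgebra ℂ A] [CompleteSpace A]

theorem isClosed_setOf_mem_spectrum : IsClosed {p : ℂ × A | p.1 ∈ spectrum ℂ p.2} :=
  (Units.isOpen.preimage ((continuous_algebraMap ℂ A).comp continuous_fst |>.sub
    continuous_snd)).isClosed_compl

theorem mem_spectrum_of_mapClusterPt {s : ℕ → A} {b : A} {w : ℕ → ℂ} {z : ℂ}
    (hs : Tendsto s atTop (𝓝 b)) (hw : ∀ n, w n ∈ spectrum ℂ (s n))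
    (hz : MapClusterPt z atTop w) : z ∈ spectrum ℂ b := by
  obtain ⟨φ, hφ, hwφ⟩ := hz.tendsto_subseq
  exact isClosed_setOf_mem_spectrum.mem_of_tendsto
    (hwφ.prodMk_nhds (hs.comp hφ.tendsto_atTop)) (.of_forall fun n => hw (φ n))

theorem MeasureTheory.StronglyMeasurable.exists_measurable_mem_spectrum [NormOneClass A]
    {Ω : Type*} [MeasurableSpace Ω] {x : Ω → A} (hx : StronglyMeasurable x) :
    ∃ a : Ω → ℂ, Measurable a ∧ ∀ ω, a ω ∈ spectrum ℂ (x ω) := by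
  have : Nontrivial A := NormOneClass.nontrivial
  choose σ hσ using fun b : A => spectrum.nonempty b
  have hw : ∀ n, Measurable fun ω => σ (hx.approx n ω) := fun n => ((hx.approx n).map σ).measurable
  refine ⟨fun ω => lexClusterPt (σ <| hx.approx · ω), measurable_lexClusterPt hw, fun ω => ?_⟩
  have hconv := hx.tendsto_approx ω
  refine mem_spectrum_of_mapClusterPt hconv (fun n => hσ _) (mapClusterPt_lexClusterPt ?_)
  obtain ⟨C, hC⟩ := isBounded_iff_forall_norm_le.1 (Metric.isBounded_range_of_tendsto _ hconv)
  exact isBounded_iff_forall_norm_le.2 ⟨C, by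
    rintro _ ⟨n, rfl⟩; exact (spectrum.norm_le_norm_of_mem (hσ _)).trans (hC _ ⟨n, rfl⟩)⟩

end Spectrum

theorem stmt6_general {Ω : Type*} [MeasurableSpace Ω] (μ : Measure Ω)
    (hμ : 0 < μ Set.univ)
    {A : Type*} [NormedRing A] [NormedAlgebra ℂ A] [CompleteSpace A] [NormOneClass A]
    (x : Ω → A) (hx : AEStronglyMeasurable x μ) :
    ∃ a : Ω → ℂ, Measurable a ∧
      ¬ ∃ y : Ω → A, AEStronglyMeasurable y μ ∧
        ∀ᵐ ω ∂μ, (a ω • (1 : A) - x ω) * y ω = 1 ∧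
                 y ω * (a ω • (1 : A) - x ω) = 1 := by
  obtain ⟨a, ha, ha_mem⟩ := hx.stronglyMeasurable_mk.exists_measurable_mem_spectrum
  refine ⟨a, ha, fun ⟨y, _, hy⟩ => ?_⟩
  have : (ae μ).NeBot := ae_neBot.2 (Measure.measure_univ_pos.1 hμ)
  obtain ⟨ω, hxω, hyω⟩ := (hx.ae_eq_mk.and hy).exists
  refine spectrum.mem_iff.1 (hxω ▸ ha_mem ω) ⟨⟨_, y ω, hyω.1, hyω.2⟩, ?_⟩
  rw [Algebra.algebraMap_eq_smul_one]

/-- For every a.e. strongly measurable `x : Ω → A` the spectrum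
`sp(x) ⊆ L⁰(Ω, ℂ)` is non-empty: there is a measurable `a : Ω → ℂ` such that
`a·1 − x` is not invertible in `L⁰(Ω, A)`, i.e. there is no a.e. strongly
measurable `y : Ω → A` with `(a ω • 1 - x ω) * y ω = y ω * (a ω • 1 - x ω) = 1`
for μ-a.e. ω. (Proposition 2.4.) -/
theorem stmt6 {Ω : Type*} [MeasurableSpace Ω] (μ : Measure Ω) [IsFiniteMeasure μ]
    (hμ : 0 < μ Set.univ)
    {A : Type*} [NormedRing A] [NormedAlgebra ℂ A] [CompleteSpace A] [NormOneClass A]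
    (x : Ω → A) (hx : AEStronglyMeasurable x μ) :
    ∃ a : Ω → ℂ, Measurable a ∧
      ¬ ∃ y : Ω → A, AEStronglyMeasurable y μ ∧
        ∀ᵐ ω ∂μ, (a ω • (1 : A) - x ω) * y ω = 1 ∧
                 y ω * (a ω • (1 : A) - x ω) = 1 :=
  stmt6_general μ hμ x hx
end

section
/- For every a.e. strongly measurable x : Ω → A, the set spm(x) is bounded by the norm of x: if a measurable a : Ω → ℂ belongs to spm(x), then |a(ω)| ≤ ‖x(ω)‖ for μ-almost every ω. (Boundedness part of Theorem 2.5, specialized to the Banach–Kantorovich algebra L⁰(Ω, A).) -/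
/-!
On the set where `‖x ω‖ < ‖a ω‖`, the Neumann series `(a ω)⁻¹ ∑ ((a ω)⁻¹ x ω)ⁿ` is a two-sided
inverse of `a ω • 1 - x ω`, and as a pointwise limit of partial sums it depends strongly
measurably on `ω`. Membership in `spm(x)` therefore forces that set to be null.
-/

open MeasureTheory Filter

/-- `a ∈ spm(x)`: for every measurable set `S` of positive measure there is no a.e.
strongly measurable local inverse of `a·1 − x` on `S`. -/
def MemSpm {Ω : Type*} [MeasurableSpace Ω] (μ : Measure Ω)
    {A : Type*} [NormedRing A] [NormedAlgebra ℂ A]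
    (x : Ω → A) (a : Ω → ℂ) : Prop :=
  ∀ S : Set Ω, MeasurableSet S → 0 < μ S →
    ¬ ∃ y : Ω → A, AEStronglyMeasurable y μ ∧
      ∀ᵐ ω ∂μ, ω ∈ S →
        ((a ω • (1 : A) - x ω) * y ω = 1 ∧ y ω * (a ω • (1 : A) - x ω) = 1)

theorem MeasureTheory.StronglyMeasurable.tsum_of_forall_summable {α E : Type*}
    [MeasurableSpace α] [AddCommMonoid E] [TopologicalSpace E] [ContinuousAdd E]
    [TopologicalSpace.PseudoMetrizableSpace E] {f : ℕ → α → E}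
    (hf : ∀ n, StronglyMeasurable (f n)) (hsum : ∀ ω, Summable (f · ω)) :
    StronglyMeasurable fun ω ↦ ∑' n, f n ω :=
  stronglyMeasurable_of_tendsto atTop
    (fun N ↦ Finset.stronglyMeasurable_sum (Finset.range N) fun n _ ↦ hf n)
    (tendsto_pi_nhds.2 fun ω ↦ by simpa using (hsum ω).hasSum.tendsto_sum_nat)

theorem MeasureTheory.StronglyMeasurable.tsum_geometric_of_norm_lt_one {α R : Type*}
    [MeasurableSpace α] [NormedRing R] [HasSummableGeomSeries R] {t : α → R}
    (ht : StronglyMeasurable t) (ht_lt : ∀ ω, ‖t ω‖ < 1) :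
    StronglyMeasurable fun ω ↦ ∑' n, t ω ^ n :=
  tsum_of_forall_summable (fun n ↦ ht.pow n) fun ω ↦ summable_geometric_of_norm_lt_one (ht_lt ω)

theorem norm_inv_smul_lt_one_of_norm_lt {𝕜 E : Type*} [NormedField 𝕜] [SeminormedAddCommGroup E]
    [NormedSpace 𝕜 E] {c : 𝕜} {z : E} (h : ‖z‖ < ‖c‖) : ‖c⁻¹ • z‖ < 1 := by
  rwa [norm_smul, norm_inv, inv_mul_lt_iff₀ ((norm_nonneg z).trans_lt h), mul_one]

theorem smul_one_sub_mul_neumann_series {𝕜 R : Type*} [NormedField 𝕜] [NormedRing R]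
    [NormedAlgebra 𝕜 R] [HasSummableGeomSeries R] {c : 𝕜} {z : R} (h : ‖z‖ < ‖c‖) :
    (c • 1 - z) * (c⁻¹ • ∑' n, (c⁻¹ • z) ^ n) = 1 ∧
      (c⁻¹ • ∑' n, (c⁻¹ • z) ^ n) * (c • 1 - z) = 1 := by
  have hc : c ≠ 0 := norm_pos_iff.1 ((norm_nonneg z).trans_lt h)
  have hlt := norm_inv_smul_lt_one_of_norm_lt h
  have hfactor : c • 1 - z = c • (1 - c⁻¹ • z) := by
    rw [smul_sub, smul_smul, mul_inv_cancel₀ hc, one_smul]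
  rw [hfactor, smul_mul_smul_comm, smul_mul_smul_comm, mul_inv_cancel₀ hc, inv_mul_cancel₀ hc,
    one_smul, one_smul]
  exact ⟨mul_neg_geom_series _ hlt, geom_series_mul_neg _ hlt⟩

theorem exists_stronglyMeasurable_inverse_of_norm_lt {Ω 𝕜 R : Type*} [MeasurableSpace Ω]
    [NontriviallyNormedField 𝕜] [MeasurableSpace 𝕜] [BorelSpace 𝕜] [SecondCountableTopology 𝕜]
    [NormedRing R] [NormedAlgebra 𝕜 R] [HasSummableGeomSeries R]
    {x : Ω → R} (hx : StronglyMeasurable x) {a : Ω → 𝕜} (ha : Measurable a) :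
    ∃ y : Ω → R, StronglyMeasurable y ∧ ∀ ω, ‖x ω‖ < ‖a ω‖ →
      (a ω • (1 : R) - x ω) * y ω = 1 ∧ y ω * (a ω • (1 : R) - x ω) = 1 := by
  set S := {ω | ‖x ω‖ < ‖a ω‖}
  have hS : MeasurableSet S := measurableSet_lt hx.norm.measurable ha.norm
  have hinv : StronglyMeasurable fun ω ↦ (a ω)⁻¹ := ha.inv.stronglyMeasurable
  -- cutting off outside `S` makes the geometric series converge everywhere
  set t := S.indicator fun ω ↦ (a ω)⁻¹ • x ω
  have ht_of_mem : ∀ ω ∈ S, t ω = (a ω)⁻¹ • x ω := fun ω hω ↦ Set.indicator_of_mem hω _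
  have ht_lt : ∀ ω, ‖t ω‖ < 1 := by
    intro ω
    by_cases hω : ω ∈ S
    · rw [ht_of_mem ω hω]
      exact norm_inv_smul_lt_one_of_norm_lt hω
    · simp [t, hω]
  refine ⟨fun ω ↦ (a ω)⁻¹ • ∑' n, t ω ^ n,
    hinv.smul ((hinv.smul hx).indicator hS |>.tsum_geometric_of_norm_lt_one ht_lt), fun ω hω ↦ ?_⟩
  simp only [ht_of_mem ω hω]
  exact smul_one_sub_mul_neumann_series hω

theorem stmt8_general {Ω : Type*} [MeasurableSpace Ω] (μ : Measure Ω)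
    {A : Type*} [NormedRing A] [NormedAlgebra ℂ A] [CompleteSpace A]
    (x : Ω → A) (hx : AEStronglyMeasurable x μ)
    (a : Ω → ℂ) (ha : Measurable a) (haspm : MemSpm μ x a) :
    ∀ᵐ ω ∂μ, ‖a ω‖ ≤ ‖x ω‖ := by
  obtain ⟨y, hy, hy_inv⟩ := exists_stronglyMeasurable_inverse_of_norm_lt hx.stronglyMeasurable_mk ha
  set S := {ω | ‖hx.mk x ω‖ < ‖a ω‖}
  have hS : MeasurableSet S := measurableSet_lt hx.stronglyMeasurable_mk.norm.measurable ha.norm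
  have hS_null : μ S = 0 := by
    by_contra hS_pos
    refine haspm S hS (pos_iff_ne_zero.2 hS_pos) ⟨y, hy.aestronglyMeasurable, ?_⟩
    filter_upwards [hx.ae_eq_mk] with ω hω hωS
    rw [hω]
    exact hy_inv ω hωS
  filter_upwards [hx.ae_eq_mk, measure_eq_zero_iff_ae_notMem.1 hS_null] with ω hω hωS
  rw [hω]
  exact not_lt.1 hωS

/-- `spm(x)` is bounded by the norm of `x`: if a measurable `a : Ω → ℂ`
belongs to `spm(x)` then `|a ω| ≤ ‖x ω‖` for μ-a.e. ω. (Boundedness part of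
Theorem 2.5.) -/
theorem stmt8 {Ω : Type*} [MeasurableSpace Ω] (μ : Measure Ω) [IsFiniteMeasure μ]
    (hμ : 0 < μ Set.univ)
    {A : Type*} [NormedRing A] [NormedAlgebra ℂ A] [CompleteSpace A] [NormOneClass A]
    (x : Ω → A) (hx : AEStronglyMeasurable x μ)
    (a : Ω → ℂ) (ha : Measurable a) (haspm : MemSpm μ x a) :
    ∀ᵐ ω ∂μ, ‖a ω‖ ≤ ‖x ω‖ :=
  stmt8_general μ x hx a ha haspm
end

section
/- For every a.e. strongly measurable x : Ω → A, the set spm(x) is (o)-closed, i.e., closed under almost-everywhere convergence: if (a_n) is a sequence of measurable functions Ω → ℂ with a_n ∈ spm(x) for every n, and a : Ω → ℂ is measurable with a_n(ω) → a(ω) for μ-almost every ω, then a ∈ spm(x). (Closedness part of Theorem 2.5, specialized to the Banach–Kantorovich algebra L⁰(Ω, A), where order convergence in L⁰ coincides with a.e. convergence.) -/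
open MeasureTheory Filter Topology

/-!
If `b ∉ spm(x)`, then `b·1 − x` has a measurable inverse `y` on a set `S` of positive measure.
Since `aₙ → b` a.e., `S` is covered up to a null set by the sets `Tₙ ⊆ S` on which
`‖(b − aₙ) y‖ < 1`, so some `Tₙ` has positive measure. On `Tₙ` we have
`aₙ·1 − x = (b·1 − x)(1 − (b − aₙ) y)`, and the second factor is inverted by a Neumann series,
which is a.e. strongly measurable as an a.e. limit of its partial sums. Hence `aₙ ∉ spm(x)`.
-/

theorem sub_smul_one_mul_inverse_mul_eq_one {𝕜 A : Type*} [CommSemiring 𝕜] [Ring A]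
    [Algebra 𝕜 A] {w y : A} (hwy : w * y = 1) (hyw : y * w = 1) (c : 𝕜)
    (hu : IsUnit (1 - c • y)) :
    (w - c • 1) * (Ring.inverse (1 - c • y) * y) = 1 ∧
      Ring.inverse (1 - c • y) * y * (w - c • 1) = 1 := by
  have hfactor : w - c • 1 = w * (1 - c • y) := by
    rw [mul_sub, mul_one, mul_smul_comm, hwy]
  rw [hfactor]
  constructor
  · rw [mul_assoc, ← mul_assoc (1 - c • y), Ring.mul_inverse_cancel _ hu, one_mul, hwy]
  · rw [mul_assoc, ← mul_assoc y, hyw, one_mul, Ring.inverse_mul_cancel _ hu]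

theorem MeasureTheory.AEStronglyMeasurable.inverse_one_sub {Ω A : Type*} [MeasurableSpace Ω]
    {μ : Measure Ω} [NormedRing A] [HasSummableGeomSeries A] {v : Ω → A}
    (hv : AEStronglyMeasurable v μ) (hlt : ∀ᵐ ω ∂μ, ‖v ω‖ < 1) :
    AEStronglyMeasurable (fun ω => Ring.inverse (1 - v ω)) μ := by
  refine aestronglyMeasurable_of_tendsto_ae atTop
    (f := fun N ω => ∑ k ∈ Finset.range N, v ω ^ k) (fun N => ?_) ?_
  · exact Finset.aestronglyMeasurable_fun_sum _ fun k _ => hv.pow k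
  · filter_upwards [hlt] with ω hω
    exact (hasSum_geom_series_inverse (v ω) hω).tendsto_sum_nat

theorem MeasureTheory.exists_measure_pos_of_ae_le_iUnion {Ω ι : Type*} [MeasurableSpace Ω]
    {μ : Measure Ω} [Countable ι] {S : Set Ω} {T : ι → Set Ω} (hST : S ≤ᵐ[μ] ⋃ i, T i)
    (hS : 0 < μ S) : ∃ i, 0 < μ (T i) := by
  by_contra! hnull
  exact hS.ne' (measure_mono_null_ae hST
    (measure_iUnion_null fun i => nonpos_iff_eq_zero.1 (hnull i)))

def HasLocalInverse {Ω A : Type*} [MeasurableSpace Ω] [Monoid A] [TopologicalSpace A]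
    (μ : Measure Ω) (f : Ω → A) (S : Set Ω) : Prop :=
  ∃ y : Ω → A, AEStronglyMeasurable y μ ∧ ∀ᵐ ω ∂μ, ω ∈ S → f ω * y ω = 1 ∧ y ω * f ω = 1

theorem memSpm_iff {Ω A : Type*} [MeasurableSpace Ω] {μ : Measure Ω} [NormedRing A]
    [NormedAlgebra ℂ A] {x : Ω → A} {a : Ω → ℂ} :
    MemSpm μ x a ↔ ∀ S, MeasurableSet S → 0 < μ S →
      ¬ HasLocalInverse μ (fun ω => a ω • (1 : A) - x ω) S :=
  Iff.rfl

theorem hasLocalInverse_sub_smul_one {Ω A : Type*} [MeasurableSpace Ω] {μ : Measure Ω}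
    [NormedRing A] [NormedAlgebra ℂ A] [HasSummableGeomSeries A] {w y : Ω → A} {S T : Set Ω}
    (hy : AEStronglyMeasurable y μ)
    (hinv : ∀ᵐ ω ∂μ, ω ∈ S → w ω * y ω = 1 ∧ y ω * w ω = 1) {c : Ω → ℂ} (hc : Measurable c)
    (hT : MeasurableSet T) (hTS : T ⊆ S) (hsmall : ∀ᵐ ω ∂μ, ω ∈ T → ‖c ω • y ω‖ < 1) :
    HasLocalInverse μ (fun ω => w ω - c ω • (1 : A)) T := by
  -- Off `T` the scalar is replaced by `0`, so that the Neumann series converges everywhere.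
  set v : Ω → A := fun ω => T.indicator c ω • y ω
  have hv_small : ∀ᵐ ω ∂μ, ‖v ω‖ < 1 := by
    filter_upwards [hsmall] with ω hω
    by_cases hωT : ω ∈ T
    · simpa [v, hωT] using hω hωT
    · simp [v, hωT]
  refine ⟨fun ω => Ring.inverse (1 - v ω) * y ω,
    ((hc.indicator hT).aestronglyMeasurable.smul hy).inverse_one_sub hv_small |>.mul hy, ?_⟩
  filter_upwards [hinv, hsmall] with ω hω hωsmall hωT
  obtain ⟨hwy, hyw⟩ := hω (hTS hωT)
  have hv : v ω = c ω • y ω := by simp [v, hωT]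
  rw [hv]
  exact sub_smul_one_mul_inverse_mul_eq_one hwy hyw (c ω)
    (isUnit_one_sub_of_norm_lt_one (hωsmall hωT))

theorem stmt9_general {Ω : Type*} [MeasurableSpace Ω] (μ : Measure Ω)
    {A : Type*} [NormedRing A] [NormedAlgebra ℂ A] [CompleteSpace A]
    (x : Ω → A)
    (a : ℕ → Ω → ℂ) (ha : ∀ n, Measurable (a n)) (haspm : ∀ n, MemSpm μ x (a n))
    (b : Ω → ℂ) (hb : Measurable b)
    (hconv : ∀ᵐ ω ∂μ, Tendsto (fun n => a n ω) atTop (𝓝 (b ω))) :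
    MemSpm μ x b := by
  rintro S hS hSpos ⟨y, hy, hinv⟩
  set T : ℕ → Set Ω := fun n => S ∩ {ω | ‖(b ω - a n ω) • hy.mk y ω‖ < 1}
  have hT : ∀ n, MeasurableSet (T n) := fun n => hS.inter <| measurableSet_lt
    ((hb.sub (ha n)).stronglyMeasurable.smul hy.stronglyMeasurable_mk).norm.measurable
    measurable_const
  have hcover : S ≤ᵐ[μ] ⋃ n, T n := by
    filter_upwards [hconv] with ω hω hωS
    have hsmall : Tendsto (fun n => ‖(b ω - a n ω) • hy.mk y ω‖) atTop (𝓝 0) := by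
      simpa [norm_smul] using
        ((tendsto_const_nhds (x := b ω)).sub hω).norm.mul_const ‖hy.mk y ω‖
    obtain ⟨n, hn⟩ := (hsmall.eventually (eventually_lt_nhds zero_lt_one)).exists
    exact Set.mem_iUnion.2 ⟨n, hωS, hn⟩
  obtain ⟨n, hTn⟩ := exists_measure_pos_of_ae_le_iUnion hcover hSpos
  refine (memSpm_iff.1 (haspm n)) (T n) (hT n) hTn ?_
  have hsub : (fun ω => a n ω • (1 : A) - x ω) =
      fun ω => (b ω • 1 - x ω) - (b ω - a n ω) • 1 := by
    ext ω; module
  rw [hsub]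
  refine hasLocalInverse_sub_smul_one hy.stronglyMeasurable_mk.aestronglyMeasurable ?_
    (hb.sub (ha n)) (hT n) Set.inter_subset_left (ae_of_all _ fun ω hω => hω.2)
  filter_upwards [hinv, hy.ae_eq_mk] with ω hω hyω hωS
  rw [← hyω]
  exact hω hωS

/-- `spm(x)` is (o)-closed, i.e. closed under a.e. convergence: if
`a n ∈ spm(x)` for every `n` and `a n ω → a ω` for μ-a.e. ω, with all functions
measurable, then `a ∈ spm(x)`. (Closedness part of Theorem 2.5.) -/
theorem stmt9 {Ω : Type*} [MeasurableSpace Ω] (μ : Measure Ω) [IsFiniteMeasure μ]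
    (hμ : 0 < μ Set.univ)
    {A : Type*} [NormedRing A] [NormedAlgebra ℂ A] [CompleteSpace A] [NormOneClass A]
    (x : Ω → A) (hx : AEStronglyMeasurable x μ)
    (a : ℕ → Ω → ℂ) (ha : ∀ n, Measurable (a n)) (haspm : ∀ n, MemSpm μ x (a n))
    (b : Ω → ℂ) (hb : Measurable b)
    (hconv : ∀ᵐ ω ∂μ, Tendsto (fun n => a n ω) atTop (𝓝 (b ω))) :
    MemSpm μ x b :=
  stmt9_general μ x a ha haspm b hb hconv
end

section
/- For every a.e. strongly measurable x : Ω → A, the set spm(x) is cyclic, i.e., closed under countable mixing: if (S_n)_{n∈ℕ} is a sequence of pairwise disjoint measurable subsets of Ω whose union is μ-almost all of Ω, (a_n) is a sequence of measurable functions Ω → ℂ with a_n ∈ spm(x) for every n, and a : Ω → ℂ is measurable with a(ω) = a_n(ω) for a.e. ω ∈ S_n for every n (so a = Σ_n χ_{S_n} a_n), then a ∈ spm(x). (Cyclicity part of Theorem 2.5, specialized to the Banach–Kantorovich algebra L⁰(Ω, A), where partitions of unity of idempotents correspond to countable measurable partitions of Ω.) -/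
open MeasureTheory Filter

/-- `spm(x)` is cyclic (closed under countable mixing): if `(S n)` is a
sequence of pairwise disjoint measurable sets covering μ-almost all of Ω, each
measurable `a n : Ω → ℂ` belongs to `spm(x)`, and the measurable `b : Ω → ℂ` agrees
with `a n` a.e. on `S n` for every `n` (so `b = Σ_n χ_{S n} a n`), then
`b ∈ spm(x)`. (Cyclicity part of Theorem 2.5.) -/
theorem stmt10 {Ω : Type*} [MeasurableSpace Ω] (μ : Measure Ω) [IsFiniteMeasure μ]
    (hμ : 0 < μ Set.univ)
    {A : Type*} [NormedRing A] [NormedAlgebra ℂ A] [CompleteSpace A] [NormOneClass A]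
    (x : Ω → A) (hx : AEStronglyMeasurable x μ)
    (S : ℕ → Set Ω) (hSmeas : ∀ n, MeasurableSet (S n))
    (hSdisj : Pairwise (Function.onFun Disjoint S))
    (hScover : μ (Set.univ \ ⋃ n, S n) = 0)
    (a : ℕ → Ω → ℂ) (ha : ∀ n, Measurable (a n)) (haspm : ∀ n, MemSpm μ x (a n))
    (b : Ω → ℂ) (hb : Measurable b)
    (hbeq : ∀ n, ∀ᵐ ω ∂μ, ω ∈ S n → b ω = a n ω) :
    MemSpm μ x b := by
  intro T hT hTpos
  rintro ⟨y, hy, hinv⟩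
  -- T ∩ (⋃ n, S n) has positive measure
  have hTdiff : μ (T \ ⋃ n, S n) = 0 :=
    measure_mono_null (Set.diff_subset_diff_left (Set.subset_univ T)) hScover
  have hcup : 0 < μ (T ∩ ⋃ n, S n) := by
    have : μ T ≤ μ (T ∩ ⋃ n, S n) + μ (T \ ⋃ n, S n) :=
      measure_le_inter_add_diff μ T _
    rw [hTdiff, add_zero] at this
    exact lt_of_lt_of_le hTpos this
  rw [Set.inter_iUnion] at hcup
  have : ∃ n, 0 < μ (T ∩ S n) := by
    by_contra h
    push_neg at h
    simp only [le_zero_iff] at h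
    have : μ (⋃ n, T ∩ S n) = 0 := measure_iUnion_null h
    exact absurd this hcup.ne'
  obtain ⟨n, hn⟩ := this
  refine haspm n (T ∩ S n) (hT.inter (hSmeas n)) hn ⟨y, hy, ?_⟩
  filter_upwards [hinv, hbeq n] with ω h1 h2 hmem
  have hb' : b ω = a n ω := h2 hmem.2
  have := h1 hmem.1
  rwa [hb'] at this
end

section
/- Vector-valued Gelfand–Mazur theorem: suppose that every element of L⁰(Ω, A) with unit support is invertible, i.e., for every a.e. strongly measurable f : Ω → A with ‖f(ω)‖ ≠ 0 for μ-almost every ω there exists an a.e. strongly measurable g : Ω → A with f(ω)g(ω) = g(ω)f(ω) = 1 a.e. Then L⁰(Ω, A) is isometrically isomorphic to L⁰(Ω, ℂ): for every a.e. strongly measurable f : Ω → A there exists a measurable a_f : Ω → ℂ, unique up to a.e. equality, with f(ω) = a_f(ω)·1 for a.e. ω, and moreover ‖f(ω)‖ = |a_f(ω)| a.e. and a_{fg} = a_f·a_g a.e. (Theorem 3.1, specialized to E = L⁰(Ω) and the constant measurable bundle 𝒳(ω) = A.) -/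
/-!
A nonzero `a ∈ A` has unit support as a constant function, so it has an a.e. inverse `g`, and
`g ω` is an inverse of `a` for any single `ω` outside the null set (there is one since `μ ≠ 0`).
Hence `A` is a complex Banach division algebra and Gelfand–Mazur gives `e : ℂ ≃ₐ[ℂ] A`; with
`‖1‖ = 1`, `e.symm` is a multiplicative isometry `A → ℂ`. The scalar function of `f` is a
strongly measurable representative of `e.symm ∘ f`.
-/

open MeasureTheory Filter

theorem isUnit_of_ae_inverse {Ω A : Type*} [MeasurableSpace Ω] {μ : Measure Ω} [NeZero μ]
    [Monoid A] {a : A} {g : Ω → A} (h : ∀ᵐ ω ∂μ, a * g ω = 1 ∧ g ω * a = 1) : IsUnit a :=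
  let ⟨ω, hag, hga⟩ := h.exists
  ⟨⟨a, g ω, hag, hga⟩, rfl⟩

namespace AlgEquiv

variable {𝕜 A : Type*} [CommSemiring 𝕜] [Semiring A] [Algebra 𝕜 A] (e : 𝕜 ≃ₐ[𝕜] A)

theorem symm_apply_smul_one (a : A) : e.symm a • (1 : A) = a := by
  rw [← Algebra.algebraMap_eq_smul_one, ← e.commutes, Algebra.algebraMap_self, RingHom.id_apply,
    e.apply_symm_apply]

theorem symm_smul_one (z : 𝕜) : e.symm (z • (1 : A)) = z := by
  rw [← Algebra.algebraMap_eq_smul_one, e.symm.commutes, Algebra.algebraMap_self,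
    RingHom.id_apply]

end AlgEquiv

theorem AlgEquiv.isometry_symm {𝕜 A : Type*} [NormedField 𝕜] [NormedRing A] [NormedAlgebra 𝕜 A]
    [NormOneClass A] (e : 𝕜 ≃ₐ[𝕜] A) : Isometry e.symm :=
  AddMonoidHomClass.isometry_of_norm e.symm fun a => by
    conv_rhs => rw [← e.symm_apply_smul_one a]
    rw [norm_smul, norm_one, mul_one]

section aeComp

variable {Ω A B : Type*} [MeasurableSpace Ω] [TopologicalSpace A] [Zero B]

open Classical in
/-- A strongly measurable representative of `φ ∘ f` when `φ` is continuous and `f` is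
a.e. strongly measurable (and `0` for other `f`). -/
noncomputable def aeComp (μ : Measure Ω) (φ : A → B) (f : Ω → A) : Ω → B :=
  if hf : AEStronglyMeasurable f μ then φ ∘ hf.mk f else 0

variable {μ : Measure Ω} {φ : A → B} {f : Ω → A}

theorem stronglyMeasurable_aeComp [TopologicalSpace B] (hφ : Continuous φ)
    (hf : AEStronglyMeasurable f μ) :
    StronglyMeasurable (aeComp μ φ f) := by
  rw [aeComp, dif_pos hf]
  exact hφ.comp_stronglyMeasurable hf.stronglyMeasurable_mk

theorem aeComp_ae_eq (hf : AEStronglyMeasurable f μ) : aeComp μ φ f =ᵐ[μ] φ ∘ f := by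
  rw [aeComp, dif_pos hf]
  exact hf.ae_eq_mk.symm.fun_comp φ

end aeComp

theorem stmt11_general {Ω : Type*} [MeasurableSpace Ω] (μ : Measure Ω)
    (hμ : 0 < μ Set.univ)
    {A : Type*} [NormedRing A] [NormedAlgebra ℂ A] [CompleteSpace A] [NormOneClass A]
    (hinv : ∀ f : Ω → A, AEStronglyMeasurable f μ → (∀ᵐ ω ∂μ, ‖f ω‖ ≠ 0) →
      ∃ g : Ω → A, AEStronglyMeasurable g μ ∧
        ∀ᵐ ω ∂μ, f ω * g ω = 1 ∧ g ω * f ω = 1) :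
    ∃ T : (Ω → A) → (Ω → ℂ),
      (∀ f : Ω → A, AEStronglyMeasurable f μ →
        Measurable (T f) ∧
        (∀ᵐ ω ∂μ, f ω = T f ω • (1 : A)) ∧
        (∀ᵐ ω ∂μ, ‖f ω‖ = ‖T f ω‖)) ∧
      (∀ f : Ω → A, AEStronglyMeasurable f μ → ∀ a : Ω → ℂ, Measurable a →
        (∀ᵐ ω ∂μ, f ω = a ω • (1 : A)) → T f =ᵐ[μ] a) ∧
      (∀ f g : Ω → A, AEStronglyMeasurable f μ → AEStronglyMeasurable g μ →
        T (fun ω => f ω * g ω) =ᵐ[μ] fun ω => T f ω * T g ω) := by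
  have : NeZero μ := ⟨by rintro rfl; simp at hμ⟩
  have : Nontrivial A := NormOneClass.nontrivial
  have hA : ∀ {a : A}, IsUnit a ↔ a ≠ 0 := fun {a} =>
    ⟨IsUnit.ne_zero, fun ha =>
      let ⟨_, _, hg⟩ := hinv (fun _ => a) aestronglyMeasurable_const
        (.of_forall fun _ => norm_ne_zero_iff.2 ha)
      isUnit_of_ae_inverse hg⟩
  set e := NormedRing.algEquivComplexOfComplete hA
  have hT {f : Ω → A} (hf : AEStronglyMeasurable f μ) :
      aeComp μ (e.symm : A → ℂ) f =ᵐ[μ] e.symm ∘ f :=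
    aeComp_ae_eq hf
  refine ⟨aeComp μ (e.symm : A → ℂ), fun f hf => ?_, fun f hf a _ hfa => ?_, fun f g hf hg => ?_⟩
  · have hrep : ∀ᵐ ω ∂μ, f ω = aeComp μ e.symm f ω • (1 : A) := by
      filter_upwards [hT hf] with ω hω
      rw [hω, Function.comp_apply, e.symm_apply_smul_one]
    refine ⟨(stronglyMeasurable_aeComp e.isometry_symm.continuous hf).measurable, hrep, ?_⟩
    filter_upwards [hrep] with ω hω
    rw [hω, norm_smul, norm_one, mul_one]
  · filter_upwards [hT hf, hfa] with ω hω hfaω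
    rw [hω, Function.comp_apply, hfaω, e.symm_smul_one]
  · filter_upwards [hT (hf.mul hg), hT hf, hT hg] with ω hfgω hfω hgω
    rw [hfω, hgω]
    exact hfgω.trans (map_mul e.symm (f ω) (g ω))

/-- vector-valued Gelfand–Mazur theorem: if every element of
`L⁰(Ω, A)` with unit support is invertible (for every a.e. strongly measurable
`f` with `‖f ω‖ ≠ 0` a.e. there is an a.e. strongly measurable two-sided inverse),
then `L⁰(Ω, A)` is isometrically isomorphic to `L⁰(Ω, ℂ)`: there is an assignment
`f ↦ T f` such that `T f` is measurable, `f ω = T f ω • 1` a.e., `‖f ω‖ = |T f ω|`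
a.e., `T f` is the unique (up to a.e. equality) measurable scalar representative of
`f`, and `T` is multiplicative: `T (f·g) = T f · T g` a.e. (Theorem 3.1.) -/
theorem stmt11 {Ω : Type*} [MeasurableSpace Ω] (μ : Measure Ω) [IsFiniteMeasure μ]
    (hμ : 0 < μ Set.univ)
    {A : Type*} [NormedRing A] [NormedAlgebra ℂ A] [CompleteSpace A] [NormOneClass A]
    (hinv : ∀ f : Ω → A, AEStronglyMeasurable f μ → (∀ᵐ ω ∂μ, ‖f ω‖ ≠ 0) →
      ∃ g : Ω → A, AEStronglyMeasurable g μ ∧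
        ∀ᵐ ω ∂μ, f ω * g ω = 1 ∧ g ω * f ω = 1) :
    ∃ T : (Ω → A) → (Ω → ℂ),
      (∀ f : Ω → A, AEStronglyMeasurable f μ →
        Measurable (T f) ∧
        (∀ᵐ ω ∂μ, f ω = T f ω • (1 : A)) ∧
        (∀ᵐ ω ∂μ, ‖f ω‖ = ‖T f ω‖)) ∧
      (∀ f : Ω → A, AEStronglyMeasurable f μ → ∀ a : Ω → ℂ, Measurable a →
        (∀ᵐ ω ∂μ, f ω = a ω • (1 : A)) → T f =ᵐ[μ] a) ∧
      (∀ f g : Ω → A, AEStronglyMeasurable f μ → AEStronglyMeasurable g μ →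
        T (fun ω => f ω * g ω) =ᵐ[μ] fun ω => T f ω * T g ω) :=
  stmt11_general μ hμ hinv
end

section
/- Suppose there exists a measurable function m : Ω → ℝ such that for all a.e. strongly measurable f, g : Ω → A one has ‖f(ω)‖·‖g(ω)‖ ≤ m(ω)·‖f(ω)g(ω)‖ for μ-almost every ω. Then L⁰(Ω, A) is isometrically isomorphic to L⁰(Ω, ℂ): for every a.e. strongly measurable f : Ω → A there exists a measurable a_f : Ω → ℂ, unique up to a.e. equality, with f(ω) = a_f(ω)·1 for a.e. ω, and moreover ‖f(ω)‖ = |a_f(ω)| a.e. (Theorem 3.2, specialized to E = L⁰(Ω) and the constant measurable bundle 𝒳(ω) = A.) -/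
/-!
Taking `f` and `g` constant, the hypothesis gives for every `x` and every sequence `yₙ` in `A`
a single point `ω` with `‖x‖ ‖yₙ‖ ≤ m ω ‖x yₙ‖` for all `n`: no nonzero element of `A` is a
topological divisor of zero. For a point `l` on the boundary of the spectrum of `a`, the element
`l - a` is a limit of invertible elements `lₙ - a`, and `yₙ = (lₙ - a)⁻¹` makes it a topological
divisor of zero; hence `a = l • 1`. So `c ↦ c • 1` is an isometric isomorphism `ℂ ≃ A`, and
composing with its inverse turns `f` into the scalar function `a_f`.
-/

open MeasureTheory Filter Topology

section TopologicalZeroDivisor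

variable {R : Type*} [NormedRing R] [HasSummableGeomSeries R]

theorem Units.norm_inv_inv_le_norm_sub_of_not_isUnit {x : R} (hx : ¬IsUnit x) (u : Rˣ) :
    ‖(↑u⁻¹ : R)‖⁻¹ ≤ ‖x - u‖ :=
  not_lt.mp fun h => hx (Units.ofNearby u x h).isUnit

theorem norm_mul_inv_le_of_not_isUnit [NormOneClass R] {x : R} (hx : ¬IsUnit x) (u : Rˣ) :
    ‖x * ↑u⁻¹‖ ≤ 2 * ‖x - u‖ * ‖(↑u⁻¹ : R)‖ := by
  have hfar : 1 ≤ ‖x - u‖ * ‖(↑u⁻¹ : R)‖ := by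
    have : Nontrivial R := NormOneClass.nontrivial
    have hpos : 0 < ‖(↑u⁻¹ : R)‖ := norm_pos_iff.mpr (u⁻¹).ne_zero
    have hnear := Units.norm_inv_inv_le_norm_sub_of_not_isUnit hx u
    rwa [inv_le_iff_one_le_mul₀ hpos] at hnear
  calc ‖x * ↑u⁻¹‖ = ‖1 + (x - u) * ↑u⁻¹‖ := by rw [sub_mul, Units.mul_inv, add_sub_cancel]
    _ ≤ 1 + ‖x - u‖ * ‖(↑u⁻¹ : R)‖ := by
      grw [norm_add_le, norm_one, norm_mul_le]
    _ ≤ 2 * ‖x - u‖ * ‖(↑u⁻¹ : R)‖ := by linarith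

/-- A non-invertible limit of invertible elements `uₙ` is a topological divisor of zero along
`uₙ⁻¹`. -/
theorem eq_zero_of_tendsto_units_of_norm_mul_le [NormOneClass R] {x : R} (hx : ¬IsUnit x)
    {u : ℕ → Rˣ} (hu : Tendsto (fun n => (u n : R)) atTop (𝓝 x)) {C : ℝ}
    (hC : ∀ n, ‖x‖ * ‖(↑(u n)⁻¹ : R)‖ ≤ C * ‖x * ↑(u n)⁻¹‖) : x = 0 := by
  have : Nontrivial R := NormOneClass.nontrivial
  have hbound : ∀ n, ‖x‖ ≤ 2 * max C 0 * ‖x - u n‖ := fun n => by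
    have hpos : 0 < ‖(↑(u n)⁻¹ : R)‖ := norm_pos_iff.mpr (u n)⁻¹.ne_zero
    refine le_of_mul_le_mul_right ?_ hpos
    calc ‖x‖ * ‖(↑(u n)⁻¹ : R)‖ ≤ max C 0 * ‖x * ↑(u n)⁻¹‖ := by
          grw [hC n, le_max_left C 0]
      _ ≤ max C 0 * (2 * ‖x - u n‖ * ‖(↑(u n)⁻¹ : R)‖) := by
          grw [norm_mul_inv_le_of_not_isUnit hx (u n)]
      _ = 2 * max C 0 * ‖x - u n‖ * ‖(↑(u n)⁻¹ : R)‖ := by ring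
  have hlim : Tendsto (fun n => 2 * max C 0 * ‖x - u n‖) atTop (𝓝 0) := by
    have h := ((tendsto_const_nhds (x := x)).sub hu).norm.const_mul (2 * max C 0)
    rwa [sub_self, norm_zero, mul_zero] at h
  exact norm_le_zero_iff.mp (ge_of_tendsto' hlim hbound)

end TopologicalZeroDivisor

theorem algebraMap_surjective_of_norm_mul_le {A : Type*} [NormedRing A] [NormedAlgebra ℂ A]
    [CompleteSpace A] [NormOneClass A]
    (H : ∀ (x : A) (y : ℕ → A), ∃ C : ℝ, ∀ n, ‖x‖ * ‖y n‖ ≤ C * ‖x * y n‖) :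
    Function.Surjective (algebraMap ℂ A) := by
  intro a
  have : Nontrivial A := NormOneClass.nontrivial
  obtain ⟨l, hl⟩ : (frontier (spectrum ℂ a)).Nonempty :=
    nonempty_frontier_iff.mpr ⟨spectrum.nonempty a, (spectrum.isCompact a).ne_univ⟩
  rw [frontier_eq_closure_inter_closure, (spectrum.isClosed a).closure_eq] at hl
  obtain ⟨hl_spec, hl_resolvent⟩ := hl
  obtain ⟨r, hr, hr_lim⟩ := mem_closure_iff_seq_limit.mp hl_resolvent
  let u : ℕ → Aˣ := fun n => (spectrum.notMem_iff.mp (hr n)).unit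
  have hu : Tendsto (fun n => (u n : A)) atTop (𝓝 (algebraMap ℂ A l - a)) :=
    ((algebraMapCLM ℂ A).continuous.tendsto l |>.comp hr_lim).sub_const a
  obtain ⟨C, hC⟩ := H (algebraMap ℂ A l - a) fun n => ↑(u n)⁻¹
  exact ⟨l, sub_eq_zero.mp
    (eq_zero_of_tendsto_units_of_norm_mul_le (spectrum.mem_iff.mp hl_spec) hu hC)⟩

noncomputable def LinearIsometryEquiv.ofAlgebraMapSurjective (𝕜 A : Type*) [NormedField 𝕜]
    [NormedRing A] [NormedAlgebra 𝕜 A] [NormOneClass A] (h : Function.Surjective (algebraMap 𝕜 A)) :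
    𝕜 ≃ₗᵢ[𝕜] A :=
  LinearIsometryEquiv.ofSurjective
    { Algebra.linearMap 𝕜 A with
      norm_map' := (algebraMap_isometry 𝕜 A).norm_map_of_map_zero (algebraMap 𝕜 A).map_zero } h

theorem stmt12_general {Ω : Type*} [MeasurableSpace Ω] (μ : Measure Ω)
    (hμ : 0 < μ Set.univ)
    {A : Type*} [NormedRing A] [NormedAlgebra ℂ A] [CompleteSpace A] [NormOneClass A]
    (m : Ω → ℝ)
    (hbound : ∀ f g : Ω → A, AEStronglyMeasurable f μ → AEStronglyMeasurable g μ →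
      ∀ᵐ ω ∂μ, ‖f ω‖ * ‖g ω‖ ≤ m ω * ‖f ω * g ω‖) :
    ∀ f : Ω → A, AEStronglyMeasurable f μ →
      ∃ a : Ω → ℂ, Measurable a ∧
        (∀ᵐ ω ∂μ, f ω = a ω • (1 : A)) ∧
        (∀ᵐ ω ∂μ, ‖f ω‖ = ‖a ω‖) ∧
        (∀ b : Ω → ℂ, Measurable b → (∀ᵐ ω ∂μ, f ω = b ω • (1 : A)) → a =ᵐ[μ] b) := by
  have : (ae μ).NeBot := ae_neBot.mpr (Measure.measure_univ_pos.mp hμ)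
  have H : ∀ (x : A) (y : ℕ → A), ∃ C : ℝ, ∀ n, ‖x‖ * ‖y n‖ ≤ C * ‖x * y n‖ := by
    intro x y
    have hall : ∀ᵐ ω ∂μ, ∀ n, ‖x‖ * ‖y n‖ ≤ m ω * ‖x * y n‖ := ae_all_iff.mpr fun n =>
      hbound (fun _ => x) (fun _ => y n) aestronglyMeasurable_const aestronglyMeasurable_const
    obtain ⟨ω, hω⟩ := hall.exists
    exact ⟨m ω, hω⟩
  let e := LinearIsometryEquiv.ofAlgebraMapSurjective ℂ A (algebraMap_surjective_of_norm_mul_le H)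
  have he : ∀ c : ℂ, e c = c • (1 : A) := Algebra.algebraMap_eq_smul_one (A := A)
  intro f hf
  have hf_eq : ∀ᵐ ω ∂μ, f ω = e.symm (hf.mk f ω) • (1 : A) :=
    hf.ae_eq_mk.mono fun ω h => by rw [← he, e.apply_symm_apply, h]
  refine ⟨fun ω => e.symm (hf.mk f ω),
    (e.symm.continuous.comp_stronglyMeasurable hf.stronglyMeasurable_mk).measurable, hf_eq,
    hf_eq.mono fun ω h => by rw [h, ← he, e.norm_map], fun b _ hb => ?_⟩
  filter_upwards [hf_eq, hb] with ω h hb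
  exact e.injective (by rw [he, he, ← h, hb])

/-- Suppose there is a measurable `m : Ω → ℝ` such that
`‖f ω‖ · ‖g ω‖ ≤ m ω · ‖f ω * g ω‖` μ-a.e. for all a.e. strongly measurable
`f, g : Ω → A`. Then `L⁰(Ω, A)` is isometrically isomorphic to `L⁰(Ω, ℂ)`: every
a.e. strongly measurable `f : Ω → A` is of the form `f ω = a ω • 1` a.e. for a
measurable `a : Ω → ℂ`, unique up to a.e. equality, with `‖f ω‖ = |a ω|` a.e.
(Theorem 3.2.) -/
theorem stmt12 {Ω : Type*} [MeasurableSpace Ω] (μ : Measure Ω) [IsFiniteMeasure μ]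
    (hμ : 0 < μ Set.univ)
    {A : Type*} [NormedRing A] [NormedAlgebra ℂ A] [CompleteSpace A] [NormOneClass A]
    (m : Ω → ℝ) (hm : Measurable m)
    (hbound : ∀ f g : Ω → A, AEStronglyMeasurable f μ → AEStronglyMeasurable g μ →
      ∀ᵐ ω ∂μ, ‖f ω‖ * ‖g ω‖ ≤ m ω * ‖f ω * g ω‖) :
    ∀ f : Ω → A, AEStronglyMeasurable f μ →
      ∃ a : Ω → ℂ, Measurable a ∧
        (∀ᵐ ω ∂μ, f ω = a ω • (1 : A)) ∧
        (∀ᵐ ω ∂μ, ‖f ω‖ = ‖a ω‖) ∧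
        (∀ b : Ω → ℂ, Measurable b → (∀ᵐ ω ∂μ, f ω = b ω • (1 : A)) → a =ᵐ[μ] b) :=
  stmt12_general μ hμ m hbound
end
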